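/- arXiv:0712.2367 — 2 statements merged into one kernel-verified Lean document; each statement's English description precedes it below -/
import Mathlib

section
/- Let E be an elliptic curve over an algebraically closed field with O(P − Q) non-torsion for points P, Q ∈ E, and let V = L' ⊕ L'' be a direct sum of line bundles with deg L' = d and deg L'' = d + 1. For each a with 0 ≤ a ≤ d, let s_a denote the (unique up to scalar) section of L'' vanishing to order a at P and d − a at Q. Then no nonzero element of the kernel of the map S^2 H^0(V) → H^0(Sym^2 V) can be written as c(s_{a_1}·s_{a_2}) + c'(s_{a_3}·s_{a_4}) with c, c' scalars and a_1 + a_2 = a_3 + a_4, unless {a_1, a_2} = {a_3, a_4} up to the relation forcing the element to be zero. Equivalently: if c·s_{a_1}s_{a_2} + c'·s_{a_3}s_{a_4} = 0 in H^0(L''^{⊗2}) with c, c' nonzero and {a_1,a_2} ≠ {a_3,a_4}, a contradiction arises with the non-torsion hypothesis on O(P − Q). -/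
/-!
If `c·s_{a₁}s_{a₂} + c'·s_{a₃}s_{a₄} = 0` with `c, c' ≠ 0`, the two products are proportional,
so they have the same divisor of zeros; away from `P` and `Q` that divisor is
`R_{a₁} + R_{a₂}`, resp. `R_{a₃} + R_{a₄}`. The points `R_j` are pairwise distinct: if
`R_j = R_l`, the linear equivalence of the divisors of `s_j` and `s_l` says that
`(j − l)(P − Q)` is principal, so `j = l` since `P − Q` is non-torsion. Hence `a₁` is
`a₃` or `a₄`, and `a₁ + a₂ = a₃ + a₄` gives the other equality.
-/

open Finsupp

theorem eq_neg_div_smul_of_smul_add_smul_eq_zero {K M : Type*} [Field K] [AddCommGroup M]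
    [Module K M] {c c' : K} {x y : M} (hc : c ≠ 0) (h : c • x + c' • y = 0) :
    x = (-(c' / c)) • y := by
  rw [← inv_smul_smul₀ hc x, eq_neg_of_add_eq_zero_left h, smul_neg, smul_smul, neg_smul,
    div_eq_inv_mul]

section Divisors

variable {α : Type*}

theorem single_add_single_sub_single_add_single (P Q : α) (d j l : ℤ) :
    single P j + single Q (d - j) - (single P l + single Q (d - l))
      = (j - l) • (single P 1 - single Q 1) := by
  classical
  ext x
  simp only [coe_sub, coe_add, coe_smul, Pi.sub_apply, Pi.add_apply, Pi.smul_apply,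
    single_apply, smul_eq_mul]
  split_ifs <;> ring

theorem injOn_Iic_of_isPrincipal_sub {IsPrincipal : (α →₀ ℤ) → Prop} {P Q : α}
    (hnt : ∀ m : ℤ, m ≠ 0 → ¬ IsPrincipal (m • (single P (1 : ℤ) - single Q (1 : ℤ))))
    {d : ℕ} {R : ℕ → α}
    (hsec : ∀ j, j ≤ d → ∀ l, l ≤ d →
      IsPrincipal
        ((single P (j : ℤ) + single Q ((d : ℤ) - j) + single (R j) (1 : ℤ))
          - (single P (l : ℤ) + single Q ((d : ℤ) - l) + single (R l) (1 : ℤ)))) :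
    Set.InjOn R (Set.Iic d) := by
  intro j hj l hl hR
  have hprin := hsec j hj l hl
  rw [hR, add_sub_add_right_eq_sub, single_add_single_sub_single_add_single] at hprin
  by_contra hjl
  exact hnt _ (sub_ne_zero.mpr (Nat.cast_injective.ne hjl)) hprin

theorem single_add_single_add_single_add_single_apply_of_ne {P Q x : α} (hP : x ≠ P)
    (hQ : x ≠ Q) (m n : ℤ) (y z : α) :
    (single P m + single Q n + single y 1 + single z 1 : α →₀ ℤ) x
      = single y 1 x + single z 1 x := by
  simp only [Finsupp.add_apply, single_eq_of_ne hP, single_eq_of_ne hQ, zero_add]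

end Divisors

theorem stmt_4_general {K Pt Γ : Type*} [Field K] [AddCommGroup Γ] [Module K Γ]
    (P Q : Pt)
    (IsPrincipal : (Pt →₀ ℤ) → Prop)
    (hnt : ∀ m : ℤ, m ≠ 0 →
      ¬ IsPrincipal (m • (Finsupp.single P (1 : ℤ) - Finsupp.single Q (1 : ℤ))))
    (d : ℕ)
    (R : ℕ → Pt)
    (hRP : ∀ j, j ≤ d → R j ≠ P ∧ R j ≠ Q)
    (hsec : ∀ j, j ≤ d → ∀ l, l ≤ d →
      IsPrincipal
        ((Finsupp.single P (j : ℤ) + Finsupp.single Q ((d : ℤ) - j)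
            + Finsupp.single (R j) (1 : ℤ))
          - (Finsupp.single P (l : ℤ) + Finsupp.single Q ((d : ℤ) - l)
            + Finsupp.single (R l) (1 : ℤ))))
    (mul : ℕ → ℕ → Γ)                 -- the product s_a s_b ∈ H^0(L''^⊗2)
    (hmulne : ∀ a, a ≤ d → ∀ b, b ≤ d → mul a b ≠ 0)
    (Dv : ℕ → ℕ → (Pt →₀ ℤ))          -- divisor of zeros of s_a s_b
    (hDv : ∀ a, a ≤ d → ∀ b, b ≤ d →
      Dv a b = Finsupp.single P ((a : ℤ) + b) + Finsupp.single Q (2 * (d : ℤ) - a - b)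
        + Finsupp.single (R a) (1 : ℤ) + Finsupp.single (R b) (1 : ℤ))
    (hprop : ∀ a b a' b' : ℕ, mul a b ≠ 0 → mul a' b' ≠ 0 →
      (∃ c : K, c ≠ 0 ∧ mul a b = c • mul a' b') → Dv a b = Dv a' b')
    (a₁ a₂ a₃ a₄ : ℕ) (h₁ : a₁ ≤ d) (h₂ : a₂ ≤ d) (h₃ : a₃ ≤ d) (h₄ : a₄ ≤ d)
    (hsum : a₁ + a₂ = a₃ + a₄)
    (hne : ¬ ((a₁ = a₃ ∧ a₂ = a₄) ∨ (a₁ = a₄ ∧ a₂ = a₃)))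
    (c c' : K) (hc : c ≠ 0) (hc' : c' ≠ 0)
    (heq : c • mul a₁ a₂ + c' • mul a₃ a₄ = 0) :
    False := by
  have hRinj : Set.InjOn R (Set.Iic d) := injOn_Iic_of_isPrincipal_sub hnt hsec
  have hDeq : Dv a₁ a₂ = Dv a₃ a₄ :=
    hprop a₁ a₂ a₃ a₄ (hmulne a₁ h₁ a₂ h₂) (hmulne a₃ h₃ a₄ h₄)
      ⟨_, neg_ne_zero.mpr (div_ne_zero hc' hc), eq_neg_div_smul_of_smul_add_smul_eq_zero hc heq⟩
  have h13 : R a₃ ≠ R a₁ := hRinj.ne h₃ h₁ fun h ↦ hne (.inl ⟨h.symm, by omega⟩)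
  have h14 : R a₄ ≠ R a₁ := hRinj.ne h₄ h₁ fun h ↦ hne (.inr ⟨h.symm, by omega⟩)
  have hcoeff := DFunLike.congr_fun hDeq (R a₁)
  rw [hDv a₁ h₁ a₂ h₂, hDv a₃ h₃ a₄ h₄,
    single_add_single_add_single_add_single_apply_of_ne (hRP a₁ h₁).1 (hRP a₁ h₁).2,
    single_add_single_add_single_add_single_apply_of_ne (hRP a₁ h₁).1 (hRP a₁ h₁).2,
    single_eq_same, single_eq_of_ne' h13, single_eq_of_ne' h14] at hcoeff
  have hnonneg : 0 ≤ single (R a₂) (1 : ℤ) (R a₁) := single_nonneg.mpr zero_le_one _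
  omega

theorem stmt_4 {K Pt Γ : Type*} [Field K] [AddCommGroup Γ] [Module K Γ]
    (P Q : Pt) (hPQ : P ≠ Q)
    (IsPrincipal : (Pt →₀ ℤ) → Prop)
    (hnt : ∀ m : ℤ, m ≠ 0 →
      ¬ IsPrincipal (m • (Finsupp.single P (1 : ℤ) - Finsupp.single Q (1 : ℤ))))
    (d : ℕ) (hd : 1 ≤ d)
    (R : ℕ → Pt)
    (hRP : ∀ j, j ≤ d → R j ≠ P ∧ R j ≠ Q)
    (hsec : ∀ j, j ≤ d → ∀ l, l ≤ d →
      IsPrincipal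
        ((Finsupp.single P (j : ℤ) + Finsupp.single Q ((d : ℤ) - j)
            + Finsupp.single (R j) (1 : ℤ))
          - (Finsupp.single P (l : ℤ) + Finsupp.single Q ((d : ℤ) - l)
            + Finsupp.single (R l) (1 : ℤ))))
    (mul : ℕ → ℕ → Γ)                 -- the product s_a s_b ∈ H^0(L''^⊗2)
    (hmulne : ∀ a, a ≤ d → ∀ b, b ≤ d → mul a b ≠ 0)
    (Dv : ℕ → ℕ → (Pt →₀ ℤ))          -- divisor of zeros of s_a s_b
    (hDv : ∀ a, a ≤ d → ∀ b, b ≤ d →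
      Dv a b = Finsupp.single P ((a : ℤ) + b) + Finsupp.single Q (2 * (d : ℤ) - a - b)
        + Finsupp.single (R a) (1 : ℤ) + Finsupp.single (R b) (1 : ℤ))
    (hprop : ∀ a b a' b' : ℕ, mul a b ≠ 0 → mul a' b' ≠ 0 →
      (∃ c : K, c ≠ 0 ∧ mul a b = c • mul a' b') → Dv a b = Dv a' b')
    (a₁ a₂ a₃ a₄ : ℕ) (h₁ : a₁ ≤ d) (h₂ : a₂ ≤ d) (h₃ : a₃ ≤ d) (h₄ : a₄ ≤ d)
    (hsum : a₁ + a₂ = a₃ + a₄)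
    (hne : ¬ ((a₁ = a₃ ∧ a₂ = a₄) ∨ (a₁ = a₄ ∧ a₂ = a₃)))
    (c c' : K) (hc : c ≠ 0) (hc' : c' ≠ 0)
    (heq : c • mul a₁ a₂ + c' • mul a₃ a₄ = 0) :
    False :=
  stmt_4_general P Q IsPrincipal hnt d R hRP hsec mul hmulne Dv hDv hprop a₁ a₂ a₃ a₄ h₁ h₂ h₃ h₄
    hsum hne c c' hc hc' heq
end

section
/- Let E be an elliptic curve over an algebraically closed field, P, Q ∈ E with O(P − Q) non-torsion, M a line bundle of degree d + 1 on E (d ≥ 1), and for 0 ≤ j ≤ d let s_j be the unique-up-to-scalar section of M with ord_P(s_j) = j and ord_Q(s_j) = d − j. If c·s_{a}s_{b} + c'·s_{a'}s_{b'} = 0 in H^0(M^{⊗2}) with c, c' ≠ 0, then {a, b} = {a', b'}. -/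
/-!
Proportional sections have equal divisors of zeros, so `c s_a s_b + c' s_{a'} s_{b'} = 0` gives
`(a+b)P + (2d-a-b)Q + R_a + R_b = (a'+b')P + (2d-a'-b')Q + R_{a'} + R_{b'}`. Away from `P` and `Q`
this says `{R_a, R_b} = {R_{a'}, R_{b'}}`, and `j ↦ R_j` is injective: if `R_j = R_l` then
`(j - l)(P - Q)` is the difference of the divisors of `s_j` and `s_l`, hence principal, which
non-torsion of `O(P - Q)` forbids unless `j = l`.
-/

namespace Finsupp

variable {α : Type*}

theorem single_add_single_add_single_sub_eq_smul {R : Type*} [Ring R] (P Q x : α) (j l d u : R) :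
    (single P j + single Q (d - j) + single x u) - (single P l + single Q (d - l) + single x u)
      = (j - l) • (single P 1 - single Q 1) := by
  simp only [smul_sub, smul_single_one, single_sub]
  abel

theorem erase_erase_single_add_single_add_single_add_single {M : Type*} [AddCommMonoid M]
    {P Q x y : α} (n m u v : M)
    (hx : x ≠ P ∧ x ≠ Q) (hy : y ≠ P ∧ y ≠ Q) :
    ((single P n + single Q m + single x u + single y v).erase P).erase Q
      = single x u + single y v := by
  simp only [erase_add, erase_single, erase_single_ne hx.1.symm, erase_single_ne hx.2.symm,
    erase_single_ne hy.1.symm, erase_single_ne hy.2.symm, zero_add]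
  by_cases hPQ : P = Q
  · simp [hPQ]
  · simp [erase_single_ne hPQ]

end Finsupp

theorem exists_eq_smul_of_smul_add_smul_eq_zero {K V : Type*} [Field K] [AddCommGroup V]
    [Module K V] {x y : V} {c c' : K} (hc : c ≠ 0) (hc' : c' ≠ 0) (h : c • x + c' • y = 0) :
    ∃ e : K, e ≠ 0 ∧ x = e • y := by
  refine ⟨-(c⁻¹ * c'), by simp [hc, hc'], ?_⟩
  rw [neg_smul, mul_smul, ← smul_neg, ← eq_neg_of_add_eq_zero_left h, inv_smul_smul₀ hc]

theorem injOn_of_not_isPrincipal_zsmul_single_sub_single {Pt : Type*} {P Q : Pt}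
    {IsPrincipal : (Pt →₀ ℤ) → Prop}
    (hnt : ∀ m : ℤ, m ≠ 0 →
      ¬ IsPrincipal (m • (Finsupp.single P (1 : ℤ) - Finsupp.single Q (1 : ℤ))))
    {d : ℕ} {R : ℕ → Pt}
    (hsec : ∀ j, j ≤ d → ∀ l, l ≤ d →
      IsPrincipal
        ((Finsupp.single P (j : ℤ) + Finsupp.single Q ((d : ℤ) - j)
            + Finsupp.single (R j) (1 : ℤ))
          - (Finsupp.single P (l : ℤ) + Finsupp.single Q ((d : ℤ) - l)
            + Finsupp.single (R l) (1 : ℤ)))) :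
    Set.InjOn R (Set.Iic d) := by
  intro j hj l hl hR
  by_contra hne
  have h := hsec j hj l hl
  rw [hR, Finsupp.single_add_single_add_single_sub_eq_smul] at h
  exact hnt _ (sub_ne_zero.mpr (Nat.cast_injective.ne hne)) h

theorem stmt_17_general {K Pt Γ : Type*} [Field K] [AddCommGroup Γ] [Module K Γ]
    (P Q : Pt)
    (IsPrincipal : (Pt →₀ ℤ) → Prop)
    (hnt : ∀ m : ℤ, m ≠ 0 →
      ¬ IsPrincipal (m • (Finsupp.single P (1 : ℤ) - Finsupp.single Q (1 : ℤ))))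
    (d : ℕ)
    (R : ℕ → Pt)
    (hRP : ∀ j, j ≤ d → R j ≠ P ∧ R j ≠ Q)
    (hsec : ∀ j, j ≤ d → ∀ l, l ≤ d →
      IsPrincipal
        ((Finsupp.single P (j : ℤ) + Finsupp.single Q ((d : ℤ) - j)
            + Finsupp.single (R j) (1 : ℤ))
          - (Finsupp.single P (l : ℤ) + Finsupp.single Q ((d : ℤ) - l)
            + Finsupp.single (R l) (1 : ℤ))))
    (mul : ℕ → ℕ → Γ)                 -- the product s_a s_b ∈ H^0(M^⊗2)
    (hmulne : ∀ a, a ≤ d → ∀ b, b ≤ d → mul a b ≠ 0)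
    (Dv : ℕ → ℕ → (Pt →₀ ℤ))          -- divisor of zeros of s_a s_b
    (hDv : ∀ a, a ≤ d → ∀ b, b ≤ d →
      Dv a b = Finsupp.single P ((a : ℤ) + b) + Finsupp.single Q (2 * (d : ℤ) - a - b)
        + Finsupp.single (R a) (1 : ℤ) + Finsupp.single (R b) (1 : ℤ))
    (hprop : ∀ a b a' b' : ℕ, mul a b ≠ 0 → mul a' b' ≠ 0 →
      (∃ c : K, c ≠ 0 ∧ mul a b = c • mul a' b') → Dv a b = Dv a' b')
    (a b a' b' : ℕ) (ha : a ≤ d) (hb : b ≤ d) (ha' : a' ≤ d) (hb' : b' ≤ d)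
    (c c' : K) (hc : c ≠ 0) (hc' : c' ≠ 0)
    (heq : c • mul a b + c' • mul a' b' = 0) :
    (a = a' ∧ b = b') ∨ (a = b' ∧ b = a') := by
  have hRinj := injOn_of_not_isPrincipal_zsmul_single_sub_single hnt hsec
  obtain ⟨e, he, hmul⟩ := exists_eq_smul_of_smul_add_smul_eq_zero hc hc' heq
  have hDeq := congrArg (fun D => (D.erase P).erase Q)
    (hprop a b a' b' (hmulne a ha b hb) (hmulne a' ha' b' hb') ⟨e, he, hmul⟩)
  simp only [hDv a ha b hb, hDv a' ha' b' hb',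
    Finsupp.erase_erase_single_add_single_add_single_add_single _ _ _ _ (hRP a ha) (hRP b hb),
    Finsupp.erase_erase_single_add_single_add_single_add_single _ _ _ _ (hRP a' ha') (hRP b' hb')]
    at hDeq
  rcases (Finsupp.single_add_single_eq_single_add_single one_ne_zero one_ne_zero).1 hDeq with
    ⟨h₁, h₂⟩ | ⟨-, h₁, h₂⟩ | ⟨htwo, -⟩
  · exact .inl ⟨hRinj ha ha' h₁, hRinj hb hb' h₂⟩
  · exact .inr ⟨hRinj ha hb' h₁, hRinj hb ha' h₂⟩
  · norm_num at htwo

theorem stmt_17 {K Pt Γ : Type*} [Field K] [AddCommGroup Γ] [Module K Γ]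
    (P Q : Pt) (hPQ : P ≠ Q)
    (IsPrincipal : (Pt →₀ ℤ) → Prop)
    (hnt : ∀ m : ℤ, m ≠ 0 →
      ¬ IsPrincipal (m • (Finsupp.single P (1 : ℤ) - Finsupp.single Q (1 : ℤ))))
    (d : ℕ) (hd : 1 ≤ d)
    (R : ℕ → Pt)
    (hRP : ∀ j, j ≤ d → R j ≠ P ∧ R j ≠ Q)
    (hsec : ∀ j, j ≤ d → ∀ l, l ≤ d →
      IsPrincipal
        ((Finsupp.single P (j : ℤ) + Finsupp.single Q ((d : ℤ) - j)
            + Finsupp.single (R j) (1 : ℤ))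
          - (Finsupp.single P (l : ℤ) + Finsupp.single Q ((d : ℤ) - l)
            + Finsupp.single (R l) (1 : ℤ))))
    (mul : ℕ → ℕ → Γ)                 -- the product s_a s_b ∈ H^0(M^⊗2)
    (hmulne : ∀ a, a ≤ d → ∀ b, b ≤ d → mul a b ≠ 0)
    (Dv : ℕ → ℕ → (Pt →₀ ℤ))          -- divisor of zeros of s_a s_b
    (hDv : ∀ a, a ≤ d → ∀ b, b ≤ d →
      Dv a b = Finsupp.single P ((a : ℤ) + b) + Finsupp.single Q (2 * (d : ℤ) - a - b)
        + Finsupp.single (R a) (1 : ℤ) + Finsupp.single (R b) (1 : ℤ))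
    (hprop : ∀ a b a' b' : ℕ, mul a b ≠ 0 → mul a' b' ≠ 0 →
      (∃ c : K, c ≠ 0 ∧ mul a b = c • mul a' b') → Dv a b = Dv a' b')
    (a b a' b' : ℕ) (ha : a ≤ d) (hb : b ≤ d) (ha' : a' ≤ d) (hb' : b' ≤ d)
    (c c' : K) (hc : c ≠ 0) (hc' : c' ≠ 0)
    (heq : c • mul a b + c' • mul a' b' = 0) :
    (a = a' ∧ b = b') ∨ (a = b' ∧ b = a') :=
  stmt_17_general P Q IsPrincipal hnt d R hRP hsec mul hmulne Dv hDv hprop a b a' b' ha hb ha' hb' c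
    c' hc hc' heq
end
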